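/- arXiv:1501.04816 — 4 statements merged into one kernel-verified Lean document; each statement's English description precedes it below -/
import Mathlib

section
/- For every integer k ≥ 2 and every ε > 0 there exists a constant b = b(k, ε) > 0 such that the following holds. For every ε' > 0 there is n₀ such that for all n ≥ n₀, the proportion of k-uniform hypergraphs on the vertex set {1, …, kn} with exactly ⌈bn⌉ edges that contain a matching with at least (1 − ε)n edges is at least 1 − ε'. -/
open Finset

/-- The collection of all `k`-uniform hypergraphs on `Fin N` with exactly `m` edges. -/
def hypergraphSpace (N k m : ℕ) : Finset (Finset (Finset (Fin N))) :=
  Finset.powersetCard m (Finset.powersetCard k (univ : Finset (Fin N)))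

/-!
First moment method. If `R` has no matching with more than `s` edges, the vertices of a maximal
matching, padded to a set `W` of exactly `k s` vertices, meet every edge of `R`. So the bad
hypergraphs are counted by choosing `W` (at most `2 ^ (k n)` ways) and then `m` edges among the
`k`-sets meeting `W`. For `s = ⌊(1 - δ) n⌋` at least a fraction `(δ / 2) ^ k` of all `k`-sets
avoids `W`, so each `W` accounts for at most a fraction `exp (-(δ / 2) ^ k m)` of all
hypergraphs, and for `m ≥ (k + 1) n / (δ / 2) ^ k` the union bound leaves a bad fraction of at
most `exp (-n)`.
-/

theorem Nat.choose_mul_pow_le_choose_mul_pow {B T : ℕ} (hBT : B ≤ T) (m : ℕ) :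
    B.choose m * T ^ m ≤ T.choose m * B ^ m := by
  induction m with
  | zero => simp
  | succ m ih =>
    have key : (B - m) * T ≤ (T - m) * B := by
      rcases le_total m B with hmB | hBm
      · zify [hmB, hmB.trans hBT]
        nlinarith
      · simp [Nat.sub_eq_zero_of_le hBm]
    refine Nat.le_of_mul_le_mul_right ?_ m.succ_pos
    calc B.choose (m + 1) * T ^ (m + 1) * (m + 1)
        = B.choose m * T ^ m * ((B - m) * T) := by
          rw [mul_right_comm, Nat.choose_succ_right_eq]; ring
      _ ≤ T.choose m * B ^ m * ((T - m) * B) := Nat.mul_le_mul ih key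
      _ = T.choose (m + 1) * B ^ (m + 1) * (m + 1) := by
        rw [mul_right_comm _ _ (m + 1), Nat.choose_succ_right_eq]; ring

theorem Nat.cast_choose_sub_le_mul_exp {A T : ℕ} {c : ℝ} (hT : 0 < T) (hAT : A ≤ T)
    (hc : c * T ≤ A) (m : ℕ) :
    ((T - A).choose m : ℝ) ≤ T.choose m * Real.exp (-(c * m)) := by
  have hbase : ((T - A : ℕ) : ℝ) ≤ Real.exp (-c) * T := by
    rw [Nat.cast_sub hAT]
    nlinarith [Real.add_one_le_exp (-c), (Nat.cast_pos.2 hT : (0 : ℝ) < T)]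
  refine le_of_mul_le_mul_right ?_ (by positivity : (0 : ℝ) < (T : ℝ) ^ m)
  calc ((T - A).choose m : ℝ) * (T : ℝ) ^ m ≤ T.choose m * ((T - A : ℕ) : ℝ) ^ m := by
        exact_mod_cast Nat.choose_mul_pow_le_choose_mul_pow (Nat.sub_le T A) m
    _ ≤ T.choose m * (Real.exp (-c) * T) ^ m := by gcongr
    _ = T.choose m * Real.exp (-(c * m)) * (T : ℝ) ^ m := by
        rw [mul_pow, ← Real.exp_nat_mul]; ring_nf

theorem Nat.pow_mul_choose_le_choose {N u k : ℕ} {a : ℝ} (ha : 0 ≤ a)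
    (h : a * N ≤ (u + 1 - k : ℕ)) :
    a ^ k * N.choose k ≤ u.choose k :=
  calc a ^ k * N.choose k ≤ a ^ k * (N ^ k / k.factorial) := by
        gcongr; exact Nat.choose_le_pow_div k N
    _ = (a * N) ^ k / k.factorial := by rw [mul_pow, mul_div_assoc]
    _ ≤ ((u + 1 - k : ℕ) : ℝ) ^ k / k.factorial := by gcongr
    _ ≤ u.choose k := Nat.pow_le_choose k u

theorem Finset.one_sub_mul_card_le_card_filter {α : Type*} {s : Finset α} {p q : α → Prop}
    [DecidablePred p] [DecidablePred q] {ε : ℝ} (hpq : ∀ a ∈ s, ¬p a → q a)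
    (hq : ((s.filter q).card : ℝ) ≤ ε * s.card) :
    (1 - ε) * s.card ≤ (s.filter p).card := by
  have hsplit : ((s.filter p).card : ℝ) + (s.filter fun a => ¬p a).card = s.card := by
    exact_mod_cast card_filter_add_card_filter_not p
  have hnp : ((s.filter fun a => ¬p a).card : ℝ) ≤ (s.filter q).card := by
    exact_mod_cast card_le_card fun a ha => by
      rw [mem_filter] at ha ⊢
      exact ⟨ha.1, hpq a ha.1 ha.2⟩
  linarith

section Matching

variable {α : Type*}

def MatchingNumberLE (R : Finset (Finset α)) (s : ℕ) : Prop :=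
  ∀ M ⊆ R, (M : Set (Finset α)).PairwiseDisjoint id → M.card ≤ s

variable [DecidableEq α]

theorem exists_maximal_matching (R : Finset (Finset α)) (hR : ∅ ∉ R) :
    ∃ M ⊆ R, (M : Set (Finset α)).PairwiseDisjoint id ∧ ∀ e ∈ R, ¬Disjoint e (M.sup id) := by
  classical
  obtain ⟨M, hM, hmax⟩ := (R.powerset.filter fun M : Finset (Finset α) =>
    (M : Set (Finset α)).PairwiseDisjoint id).exists_max_image card ⟨∅, by simp⟩
  rw [mem_filter, mem_powerset] at hM
  refine ⟨M, hM.1, hM.2, fun e he hdisj => ?_⟩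
  have hd : ∀ f ∈ M, Disjoint e f := fun f hf => hdisj.mono_right (le_sup (f := id) hf)
  have heM : e ∉ M := fun heM => hR (by simpa [disjoint_self.1 (hd e heM)] using he)
  have hins := hmax (insert e M) <| mem_filter.2
    ⟨mem_powerset.2 (insert_subset he hM.1), by
      rw [coe_insert]; exact hM.2.insert fun f hf _ => hd f hf⟩
  rw [card_insert_of_notMem heM] at hins
  omega

variable [Fintype α]

theorem exists_cover_of_matchingNumberLE {R : Finset (Finset α)} {k s : ℕ} (hk : 0 < k)
    (hR : ∀ e ∈ R, e.card = k) (hν : MatchingNumberLE R s)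
    (hs : k * s ≤ Fintype.card α) :
    ∃ W : Finset α, W.card = k * s ∧ ∀ e ∈ R, ¬Disjoint e W := by
  obtain ⟨M, hMR, hM, hcover⟩ :=
    exists_maximal_matching R fun h => hk.ne (by simpa using hR ∅ h)
  have hcard : (M.sup id).card ≤ k * s :=
    calc (M.sup id).card = ∑ e ∈ M, e.card := by rw [sup_eq_biUnion, card_biUnion hM]; rfl
      _ = k * M.card := by rw [sum_congr rfl fun e he => hR e (hMR he), sum_const, smul_eq_mul,
          mul_comm]
      _ ≤ k * s := Nat.mul_le_mul_left k (hν M hMR hM)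
  obtain ⟨W, hMW, -, hW⟩ := exists_subsuperset_card_eq (subset_univ _) hcard (by simpa using hs)
  exact ⟨W, hW, fun e he h => hcover e he (h.mono_right hMW)⟩

theorem card_filter_not_disjoint_powersetCard (W : Finset α) (k : ℕ) :
    ((powersetCard k (univ : Finset α)).filter fun e => ¬Disjoint e W).card =
      (Fintype.card α).choose k - (Fintype.card α - W.card).choose k := by
  have heq : (powersetCard k (univ : Finset α)).filter (fun e => ¬Disjoint e W) =
      powersetCard k univ \ powersetCard k (univ \ W) := by
    ext e
    simp only [mem_filter, mem_sdiff, mem_powersetCard, subset_sdiff]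
    tauto
  rw [heq, card_sdiff_of_subset (powersetCard_mono sdiff_subset), card_powersetCard,
    card_powersetCard, card_sdiff_of_subset (subset_univ W), card_univ]

end Matching

theorem card_hypergraphSpace (N k m : ℕ) :
    (hypergraphSpace N k m).card = (N.choose k).choose m := by
  simp [hypergraphSpace, card_powersetCard]

open scoped Classical in
theorem card_filter_matchingNumberLE_le {N k s : ℕ} (m : ℕ) (hk : 0 < k) (hs : k * s ≤ N) :
    ((hypergraphSpace N k m).filter (MatchingNumberLE · s)).card ≤
      N.choose (k * s) * (N.choose k - (N - k * s).choose k).choose m := by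
  let meeting (W : Finset (Fin N)) :=
    (powersetCard k (univ : Finset (Fin N))).filter fun e => ¬Disjoint e W
  have hsub : (hypergraphSpace N k m).filter (MatchingNumberLE · s) ⊆
      (powersetCard (k * s) univ).biUnion fun W => powersetCard m (meeting W) := by
    intro R hR
    obtain ⟨hR, hν⟩ := mem_filter.1 hR
    obtain ⟨hRsub, hRcard⟩ := mem_powersetCard.1 hR
    obtain ⟨W, hW, hcover⟩ := exists_cover_of_matchingNumberLE hk
      (fun e he => (mem_powersetCard.1 (hRsub he)).2) hν (by simpa using hs)
    exact mem_biUnion.2 ⟨W, mem_powersetCard.2 ⟨subset_univ W, hW⟩,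
      mem_powersetCard.2 ⟨fun e he => mem_filter.2 ⟨hRsub he, hcover e he⟩, hRcard⟩⟩
  refine (card_le_card hsub).trans <| (card_biUnion_le_card_mul _ _
    ((N.choose k - (N - k * s).choose k).choose m) fun W hW => ?_).trans_eq
    (by simp)
  rw [card_powersetCard, card_filter_not_disjoint_powersetCard, (mem_powersetCard.1 hW).2]
  simp

-- The shape `u + 1 - k` is the one of the lower bound `Nat.pow_le_choose`.
theorem half_mul_le_sub_mul_floor {k n : ℕ} {δ : ℝ} (hδ1 : δ ≤ 1) (hδn : 2 ≤ δ * n) :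
    δ / 2 * (k * n : ℕ) ≤ (k * n - k * ⌊(1 - δ) * n⌋₊ + 1 - k : ℕ) := by
  set s := ⌊(1 - δ) * n⌋₊
  have hfloor : (s : ℝ) ≤ (1 - δ) * n := Nat.floor_le (by nlinarith)
  have hsn : k * s ≤ k * n := Nat.mul_le_mul_left k (Nat.floor_le_of_le (by nlinarith))
  have hsub : ((k * n - k * s : ℕ) : ℝ) ≤ (k * n - k * s + 1 - k : ℕ) + k := by
    exact_mod_cast (by omega : k * n - k * s ≤ k * n - k * s + 1 - k + k)
  rw [Nat.cast_sub hsn] at hsub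
  push_cast at hsub ⊢
  nlinarith [(Nat.cast_nonneg k : (0 : ℝ) ≤ k)]

open scoped Classical in
theorem card_filter_matchingNumberLE_floor_le_exp_mul {k n m : ℕ} {δ : ℝ} (hk : 0 < k)
    (hδ0 : 0 < δ) (hδ1 : δ ≤ 1) (hδn : 2 ≤ δ * n) (hm : (k + 1) * n ≤ (δ / 2) ^ k * m) :
    (((hypergraphSpace (k * n) k m).filter (MatchingNumberLE · ⌊(1 - δ) * n⌋₊)).card : ℝ) ≤
      Real.exp (-n) * (hypergraphSpace (k * n) k m).card := by
  set N := k * n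
  set s := ⌊(1 - δ) * n⌋₊
  have hs : k * s ≤ N := Nat.mul_le_mul_left k <| Nat.floor_le_of_le (by nlinarith)
  have hn : (0 : ℝ) < n := by nlinarith
  have hkN : k ≤ N := Nat.le_mul_of_pos_right k (by exact_mod_cast hn)
  have havoid := Nat.pow_mul_choose_le_choose (by positivity)
    (half_mul_le_sub_mul_floor (k := k) hδ1 hδn)
  have htwo : ((N.choose (k * s) : ℕ) : ℝ) ≤ Real.exp N := by
    calc ((N.choose (k * s) : ℕ) : ℝ) ≤ 2 ^ N := by exact_mod_cast Nat.choose_le_two_pow N _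
      _ ≤ Real.exp 1 ^ N := by gcongr; linarith [Real.add_one_le_exp 1]
      _ = Real.exp N := Real.exp_one_pow N
  calc _ ≤ ((N.choose (k * s) * (N.choose k - (N - k * s).choose k).choose m : ℕ) : ℝ) := by
        exact_mod_cast card_filter_matchingNumberLE_le m hk hs
    _ ≤ Real.exp N * ((N.choose k).choose m * Real.exp (-((δ / 2) ^ k * m))) := by
        push_cast
        gcongr
        exact Nat.cast_choose_sub_le_mul_exp (Nat.choose_pos hkN)
          (Nat.choose_le_choose k (Nat.sub_le _ _)) havoid m
    _ = Real.exp (N - (δ / 2) ^ k * m) * (hypergraphSpace N k m).card := by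
        rw [card_hypergraphSpace, sub_eq_add_neg, Real.exp_add]; ring
    _ ≤ Real.exp (-n) * (hypergraphSpace N k m).card := by
        gcongr
        rw [show (N : ℝ) = k * n by simp [N]]
        linarith

open Filter in
theorem eventually_exp_neg_natCast_le {ε : ℝ} (hε : 0 < ε) :
    ∀ᶠ n : ℕ in atTop, Real.exp (-n) ≤ ε :=
  ((Real.tendsto_exp_neg_atTop_nhds_zero.comp tendsto_natCast_atTop_atTop).eventually_lt_const
    hε).mono fun _ h => h.le

open scoped Classical in
/-- For every `k ≥ 2` and `ε > 0` there is `b > 0` such that: for every `ε' > 0` there is `n₀`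
such that for all `n ≥ n₀`, the proportion of `k`-uniform hypergraphs on `{1, …, kn}` with
exactly `⌈bn⌉` edges containing a matching with at least `(1-ε)n` edges is at least
`1 - ε'`. -/
theorem random_hypergraph_large_matching (k : ℕ) (hk : 2 ≤ k) (ε : ℝ) (hε : 0 < ε) :
    ∃ b : ℝ, 0 < b ∧ ∀ ε' : ℝ, 0 < ε' → ∃ n₀ : ℕ, ∀ n : ℕ, n₀ ≤ n →
      (1 - ε') * ((hypergraphSpace (k * n) k ⌈b * (n : ℝ)⌉₊).card : ℝ) ≤
        (((hypergraphSpace (k * n) k ⌈b * (n : ℝ)⌉₊).filter fun R =>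
            ∃ M ⊆ R, (∀ e₁ ∈ M, ∀ e₂ ∈ M, e₁ ≠ e₂ → Disjoint e₁ e₂) ∧
              (1 - ε) * (n : ℝ) ≤ (M.card : ℝ)).card : ℝ) := by
  set δ := min ε 1
  have hδ0 : 0 < δ := lt_min hε one_pos
  refine ⟨(k + 1) / (δ / 2) ^ k, by positivity, fun ε' hε' => ?_⟩
  have hlarge : ∀ᶠ n : ℕ in Filter.atTop, 2 ≤ δ * n :=
    (tendsto_natCast_atTop_atTop.const_mul_atTop hδ0).eventually_ge_atTop 2
  obtain ⟨n₀, hn₀⟩ := Filter.eventually_atTop.1 (hlarge.and (eventually_exp_neg_natCast_le hε'))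
  refine ⟨n₀, fun n hn => ?_⟩
  obtain ⟨hδn, hexp⟩ := hn₀ n hn
  have hm : (k + 1) * n ≤ (δ / 2) ^ k * ⌈(k + 1) / (δ / 2) ^ k * n⌉₊ := by
    calc (k + 1) * n = (δ / 2) ^ k * ((k + 1) / (δ / 2) ^ k * n) := by field_simp
      _ ≤ _ := by gcongr; exact Nat.le_ceil _
  refine one_sub_mul_card_le_card_filter (fun R _ hR M hMR hM => ?_)
    ((card_filter_matchingNumberLE_floor_le_exp_mul (by omega) hδ0 (min_le_right _ _) hδn hm).trans
      (by gcongr))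
  by_contra hlt
  have hs : (1 - δ) * n < M.card := Nat.lt_of_floor_lt (not_le.1 hlt)
  exact hR ⟨M, hMR, hM, by nlinarith [min_le_left ε 1]⟩
end

section
/- For every α > 0 there exists ξ = ξ(α) > 0 such that the following holds. For every ε > 0 there is n₀ such that for all n ≥ n₀ and every bipartite graph G with parts A and B of equal size n and minimum degree at least αn, the proportion of perfect matchings M̄ between A and B (i.e., bijections from A to B, viewed as sets of n pairwise disjoint edges) with the property that for every sub-matching M ⊆ M̄ with at least (1 − ξ)n edges the graph G ∪ M contains a perfect matching, is at least 1 − ε. -/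
/-!
Call a permutation `σ` `k`-spread for `G` if for all vertices `a`, `b` it maps at least `k`
neighbours of `b` into the neighbourhood of `a`. For a spread `σ`, Hall's condition holds in
`G ∪ M` whenever the sub-matching `M ⊆ σ` misses fewer than `k` left vertices: if
`|N(S)| < |S|`, pick `a ∈ S` and `b ∉ N(S)`; then `σ(N(b)) ∩ N(a)` lies in `N(S)` but avoids
`σ(S ∩ V(M))`, so it has fewer than `k` elements.

With `β = min α 1` and `ξ = (β²/8)²`, a uniformly random permutation is `ξn`-spread with high
probability: for fixed `a`, `b` and a set `X` of all but `ξn` neighbours of `b`, `σ(X)` avoids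
`N(a)` with probability at most `(1 - β)^|X| ≤ exp(-β²n/2)`, and there are at most
`n² C(n, ξn) ≤ n² exp(β²n/4)` such triples `(a, b, X)`.
-/

open Finset

theorem Nat.descFactorial_mul_pow_le {a n : ℕ} (h : a ≤ n) (L : ℕ) :
    a.descFactorial L * n ^ L ≤ a ^ L * n.descFactorial L := by
  induction L with
  | zero => simp
  | succ L ih =>
    have hstep : (a - L) * n ≤ a * (n - L) := by
      rw [Nat.sub_mul, Nat.mul_sub]
      exact Nat.sub_le_sub_left (by rw [mul_comm]; exact Nat.mul_le_mul_left L h) _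
    calc a.descFactorial (L + 1) * n ^ (L + 1)
        = ((a - L) * n) * (a.descFactorial L * n ^ L) := by
          rw [Nat.descFactorial_succ, pow_succ]; ring
      _ ≤ (a * (n - L)) * (a ^ L * n.descFactorial L) := Nat.mul_le_mul hstep ih
      _ = a ^ (L + 1) * n.descFactorial (L + 1) := by
          rw [Nat.descFactorial_succ, pow_succ]; ring

theorem Nat.choose_mul_pow_le_one_add_pow (n K : ℕ) {t : ℝ} (ht : 0 ≤ t) :
    n.choose K * t ^ K ≤ (1 + t) ^ n := by
  rcases le_or_gt K n with hK | hK
  · rw [add_comm, add_pow]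
    calc (n.choose K : ℝ) * t ^ K = t ^ K * 1 ^ (n - K) * n.choose K := by ring
      _ ≤ _ := single_le_sum (f := fun m => t ^ m * 1 ^ (n - m) * n.choose m)
        (fun m _ => by positivity) (mem_range.mpr (Nat.lt_succ_of_le hK))
  · simp [Nat.choose_eq_zero_of_lt hK]; positivity

theorem Nat.choose_le_exp {n K : ℕ} {t : ℝ} (ht : 0 < t) (hK : (K : ℝ) ≤ t ^ 2 * n) :
    (n.choose K : ℝ) ≤ Real.exp (2 * t * n) := by
  have hinv : t⁻¹ ≤ Real.exp t⁻¹ := by linarith [Real.add_one_le_exp t⁻¹]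
  calc (n.choose K : ℝ) = n.choose K * t ^ K * t⁻¹ ^ K := by
        rw [mul_assoc, ← mul_pow, mul_inv_cancel₀ ht.ne', one_pow, mul_one]
    _ ≤ Real.exp t ^ n * Real.exp t⁻¹ ^ K := by
        gcongr
        · exact (n.choose_mul_pow_le_one_add_pow K ht.le).trans
            (pow_le_pow_left₀ (by positivity) (by linarith [Real.add_one_le_exp t]) n)
    _ = Real.exp (t * n + K * t⁻¹) := by
        rw [Real.exp_add, ← Real.exp_nat_mul, ← Real.exp_nat_mul]; ring_nf
    _ ≤ Real.exp (2 * t * n) := by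
        have : (K : ℝ) * t⁻¹ ≤ t * n := by
          calc (K : ℝ) * t⁻¹ ≤ t ^ 2 * n * t⁻¹ := by gcongr
            _ = t * n := by field_simp
        exact Real.exp_le_exp.mpr (by linarith)

section

variable {V : Type*} [Fintype V] [DecidableEq V]

theorem card_perm_eqOn_eq (σ₀ : Equiv.Perm V) (X : Finset V) :
    #{σ : Equiv.Perm V | ∀ i ∈ X, σ i = σ₀ i} = (Fintype.card V - #X).factorial := by
  have htranslate : #{σ : Equiv.Perm V | ∀ i ∈ X, σ i = σ₀ i} =
      #{τ : Equiv.Perm V | ∀ i ∈ X, τ i = i} := by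
    refine card_nbij' (σ₀⁻¹ * ·) (σ₀ * ·) ?_ ?_ ?_ ?_ <;> intro σ <;> simp +contextual
  have hfix : {τ : Equiv.Perm V // ∀ i ∈ X, τ i = i} ≃ Equiv.Perm {i // i ∉ X} :=
    (Equiv.subtypeEquivRight fun τ => by simp only [not_not]).trans
      (Equiv.Perm.subtypeEquivSubtypePerm (· ∉ X)).symm
  rw [htranslate, ← Fintype.card_subtype, Fintype.card_congr hfix, Fintype.card_perm,
    Fintype.card_subtype_compl, Fintype.card_coe]

theorem card_perm_mapsTo_le (X Z : Finset V) :
    #{σ : Equiv.Perm V | ∀ i ∈ X, σ i ∈ Z} ≤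
      (#Z).descFactorial #X * (Fintype.card V - #X).factorial := by
  set s : Finset (Equiv.Perm V) := {σ | ∀ i ∈ X, σ i ∈ Z}
  let restrict (σ : Equiv.Perm V) (i : X) : V := σ i
  have hfiber : ∀ g ∈ s.image restrict, #{σ ∈ s | restrict σ = g} ≤
      (Fintype.card V - #X).factorial := by
    rintro g hg
    obtain ⟨σ₀, -, rfl⟩ := mem_image.mp hg
    rw [← card_perm_eqOn_eq σ₀ X]
    refine card_le_card fun σ hσ => ?_
    simp only [mem_filter, mem_univ, true_and] at hσ ⊢
    intro i hi
    exact congrFun hσ.2 ⟨i, hi⟩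
  have himage : s.image restrict ⊆ (univ : Finset (X ↪ Z)).image fun e i => e i := by
    intro g hg
    obtain ⟨σ, hσ, rfl⟩ := mem_image.mp hg
    simp only [s, mem_filter, mem_univ, true_and] at hσ
    exact mem_image.mpr ⟨⟨fun i => ⟨σ i, hσ i i.2⟩, fun i j h => Subtype.ext
      (σ.injective (congrArg Subtype.val h))⟩, mem_univ _, rfl⟩
  calc #s ≤ (Fintype.card V - #X).factorial * #(s.image restrict) :=
        card_le_mul_card_image s _ hfiber
    _ ≤ (Fintype.card V - #X).factorial * Fintype.card (X ↪ Z) :=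
        Nat.mul_le_mul_left _ ((card_le_card himage).trans card_image_le)
    _ = _ := by rw [Fintype.card_embedding_eq, Fintype.card_coe, Fintype.card_coe, mul_comm]

theorem card_perm_mapsTo_mul_pow_le (X Z : Finset V) :
    #{σ : Equiv.Perm V | ∀ i ∈ X, σ i ∈ Z} * Fintype.card V ^ #X ≤
      #Z ^ #X * (Fintype.card V).factorial := by
  calc #{σ : Equiv.Perm V | ∀ i ∈ X, σ i ∈ Z} * Fintype.card V ^ #X
      ≤ (#Z).descFactorial #X * (Fintype.card V - #X).factorial * Fintype.card V ^ #X :=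
        Nat.mul_le_mul_right _ (card_perm_mapsTo_le X Z)
    _ = (#Z).descFactorial #X * Fintype.card V ^ #X * (Fintype.card V - #X).factorial := by ring
    _ ≤ #Z ^ #X * (Fintype.card V).descFactorial #X * (Fintype.card V - #X).factorial :=
        Nat.mul_le_mul_right _ (Nat.descFactorial_mul_pow_le (card_le_univ Z) _)
    _ = #Z ^ #X * (Fintype.card V).factorial := by
        rw [mul_assoc, mul_comm (Nat.descFactorial _ _),
          Nat.factorial_mul_descFactorial (card_le_univ X)]

theorem card_perm_mapsTo_le_exp (X Z : Finset V) {δ : ℝ}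
    (hZ : (#Z : ℝ) ≤ (1 - δ) * Fintype.card V) :
    (#{σ : Equiv.Perm V | ∀ i ∈ X, σ i ∈ Z} : ℝ) ≤
      Real.exp (-(δ * #X)) * (Fintype.card V).factorial := by
  rcases X.eq_empty_or_nonempty with rfl | ⟨x, -⟩
  · simp [← Fintype.card_perm]
  set n := Fintype.card V
  have hn : (0 : ℝ) < n := by exact_mod_cast Fintype.card_pos_iff.mpr ⟨x⟩
  have hbase : 0 ≤ 1 - δ := nonneg_of_mul_nonneg_left ((#Z).cast_nonneg.trans hZ) hn
  have hcount : (#{σ : Equiv.Perm V | ∀ i ∈ X, σ i ∈ Z} : ℝ) * n ^ #X ≤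
      #Z ^ #X * n.factorial := by exact_mod_cast card_perm_mapsTo_mul_pow_le X Z
  have hpow : (#Z : ℝ) ^ #X ≤ Real.exp (-(δ * #X)) * n ^ #X := by
    calc (#Z : ℝ) ^ #X ≤ ((1 - δ) * n) ^ #X := pow_le_pow_left₀ (by positivity) hZ _
      _ ≤ (Real.exp (-δ) * n) ^ #X := by
          gcongr
          linarith [Real.add_one_le_exp (-δ)]
      _ = Real.exp (-(δ * #X)) * n ^ #X := by
          rw [mul_pow, ← Real.exp_nat_mul]; ring_nf
  refine le_of_mul_le_mul_right ?_ (pow_pos hn #X)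
  calc _ ≤ (#Z : ℝ) ^ #X * n.factorial := hcount
    _ ≤ Real.exp (-(δ * #X)) * n ^ #X * n.factorial := by gcongr
    _ = _ := by ring

-- An edge `(a, b)` joins the left vertex `a` to the right vertex `b`.
def rightNbrs (G : Finset (V × V)) (a : V) : Finset V := {b | (a, b) ∈ G}

def leftNbrs (G : Finset (V × V)) (b : V) : Finset V := {a | (a, b) ∈ G}

theorem card_rightNbrs (G : Finset (V × V)) (a : V) :
    #(rightNbrs G a) = #(G.filter fun e => e.1 = a) := by
  refine card_nbij' (a, ·) Prod.snd ?_ ?_ ?_ ?_ <;> intro x <;> grind [rightNbrs]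

theorem card_leftNbrs (G : Finset (V × V)) (b : V) :
    #(leftNbrs G b) = #(G.filter fun e => e.2 = b) := by
  refine card_nbij' (·, b) Prod.fst ?_ ?_ ?_ ?_ <;> intro x <;> grind [leftNbrs]

def IsSpread (G : Finset (V × V)) (σ : Equiv.Perm V) (k : ℕ) : Prop :=
  ∀ a b, k ≤ #((leftNbrs G b).image σ ∩ rightNbrs G a)

instance (G : Finset (V × V)) (σ : Equiv.Perm V) (k : ℕ) : Decidable (IsSpread G σ k) := by
  unfold IsSpread; infer_instance

theorem IsSpread.card_le_card_biUnion {G M : Finset (V × V)} {σ : Equiv.Perm V} {k : ℕ}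
    (hσ : IsSpread G σ k) (hM : M ⊆ univ.filter fun e : V × V => σ e.1 = e.2)
    (hcard : Fintype.card V ≤ #M + k) (S : Finset V) :
    #S ≤ #(S.biUnion fun a => rightNbrs (G ∪ M) a) := by
  set W := S.biUnion fun a => rightNbrs (G ∪ M) a
  by_contra! hWS
  obtain ⟨a₀, ha₀⟩ : S.Nonempty := card_pos.mp (Nat.zero_lt_of_lt hWS)
  obtain ⟨b₀, hb₀⟩ : (univ \ W).Nonempty := by
    rw [← card_pos, card_univ_sdiff]
    exact Nat.sub_pos_of_lt (hWS.trans_le (card_le_univ S))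
  have hb₀W : b₀ ∉ W := (mem_sdiff.mp hb₀).2
  set C := M.image Prod.fst
  have hMC : #M ≤ #C := by
    refine (card_le_card fun e he => ?_).trans (card_image_le (f := fun a => (a, σ a)))
    have hσe : σ e.1 = e.2 := by simpa using hM he
    exact mem_image.mpr ⟨e.1, mem_image_of_mem _ he, by rw [hσe]⟩
  have hSC : #S ≤ #(S ∩ C) + (Fintype.card V - #C) := by
    rw [← card_compl]
    exact (card_le_card fun a ha => by by_cases a ∈ C <;> simp_all).trans (card_union_le _ _)
  have hmatched : (S ∩ C).image σ ⊆ W := by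
    simp only [subset_iff, mem_image, mem_inter, W, C, mem_biUnion, rightNbrs, mem_filter,
      mem_univ, true_and, mem_union]
    rintro _ ⟨a, ⟨haS, e, he, rfl⟩, rfl⟩
    have hσe : σ e.1 = e.2 := by simpa using hM he
    exact ⟨e.1, haS, Or.inr (by rw [hσe]; exact he)⟩
  have hspread : (leftNbrs G b₀).image σ ∩ rightNbrs G a₀ ⊆ W \ (S ∩ C).image σ := by
    simp only [subset_iff, mem_inter, mem_image, mem_sdiff, leftNbrs, rightNbrs, mem_filter,
      mem_univ, true_and, not_exists, not_and]
    rintro _ ⟨⟨a, hab₀, rfl⟩, ha₀b⟩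
    refine ⟨mem_biUnion.mpr ⟨a₀, ha₀, by simp [rightNbrs, ha₀b]⟩,
      fun a' ha' haa' => ?_⟩
    rw [σ.injective haa'] at ha'
    exact hb₀W (mem_biUnion.mpr ⟨a, ha'.1, by simp [rightNbrs, hab₀]⟩)
  have hk := (hσ a₀ b₀).trans (card_le_card hspread)
  have hSCW := card_le_card hmatched
  rw [card_sdiff_of_subset hmatched] at hk
  rw [card_image_of_injective _ σ.injective] at hk hSCW
  have := card_le_univ C
  omega

theorem IsSpread.exists_perm_forall_mem_union {G M : Finset (V × V)} {σ : Equiv.Perm V} {k : ℕ}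
    (hσ : IsSpread G σ k) (hM : M ⊆ univ.filter fun e : V × V => σ e.1 = e.2)
    (hcard : Fintype.card V ≤ #M + k) : ∃ τ : Equiv.Perm V, ∀ a, (a, τ a) ∈ G ∪ M := by
  obtain ⟨f, hf, hft⟩ := (all_card_le_biUnion_card_iff_exists_injective _).mp
    (hσ.card_le_card_biUnion hM hcard)
  exact ⟨Equiv.ofBijective f hf.bijective_of_finite, fun a => by simpa [rightNbrs] using hft a⟩

theorem exists_mapsTo_compl_of_not_isSpread {G : Finset (V × V)} {σ : Equiv.Perm V} {K : ℕ}
    (hσ : ¬IsSpread G σ (K + 1)) (hK : ∀ b, K ≤ #(leftNbrs G b)) :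
    ∃ a b, ∃ T ∈ (leftNbrs G b).powersetCard K,
      ∀ i ∈ leftNbrs G b \ T, σ i ∈ (rightNbrs G a)ᶜ := by
  simp only [IsSpread, not_forall, not_le, Nat.lt_succ_iff] at hσ
  obtain ⟨a, b, hab⟩ := hσ
  set D := {i ∈ leftNbrs G b | σ i ∈ rightNbrs G a}
  have hD : #D ≤ K := by
    refine le_trans ?_ hab
    rw [← card_image_of_injective D σ.injective]
    exact card_le_card fun x hx => by
      obtain ⟨i, hi, rfl⟩ := mem_image.mp hx
      simp only [D, mem_filter] at hi
      exact mem_inter.mpr ⟨mem_image_of_mem _ hi.1, hi.2⟩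
  obtain ⟨T, hDT, hTb, hT⟩ := exists_subsuperset_card_eq (filter_subset _ _) hD (hK b)
  refine ⟨a, b, T, mem_powersetCard.mpr ⟨hTb, hT⟩, fun i hi => mem_compl.mpr fun hia => ?_⟩
  obtain ⟨hi, hiT⟩ := mem_sdiff.mp hi
  exact hiT (hDT (mem_filter.mpr ⟨hi, hia⟩))

theorem IsSpread.exists_perm_forall_mem_union_of_le_card {G M : Finset (V × V)}
    {σ : Equiv.Perm V} {ξ : ℝ} (hσ : IsSpread G σ (⌊ξ * Fintype.card V⌋₊ + 1))
    (hM : M ⊆ univ.filter fun e : V × V => σ e.1 = e.2)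
    (hMcard : (1 - ξ) * Fintype.card V ≤ #M) : ∃ τ : Equiv.Perm V, ∀ a, (a, τ a) ∈ G ∪ M := by
  refine hσ.exists_perm_forall_mem_union hM ?_
  have := Nat.lt_floor_add_one (ξ * Fintype.card V)
  exact_mod_cast (by linarith : (Fintype.card V : ℝ) ≤ #M + (⌊ξ * Fintype.card V⌋₊ + 1))

theorem card_not_isSpread_le {G : Finset (V × V)} {δ : ℝ} {K : ℕ} (hδ : 0 ≤ δ)
    (hleft : ∀ a, δ * Fintype.card V ≤ #(rightNbrs G a))
    (hright : ∀ b, δ * Fintype.card V ≤ #(leftNbrs G b))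
    (hK : (K : ℝ) ≤ δ * Fintype.card V) :
    (#{σ : Equiv.Perm V | ¬IsSpread G σ (K + 1)} : ℝ) ≤
      Fintype.card V ^ 2 * (Fintype.card V).choose K *
        Real.exp (-(δ * (δ * Fintype.card V - K))) * (Fintype.card V).factorial := by
  set n := Fintype.card V
  set E := Real.exp (-(δ * (δ * n - K))) * n.factorial
  let avoiding (a b : V) (T : Finset V) : Finset (Equiv.Perm V) :=
    {σ | ∀ i ∈ leftNbrs G b \ T, σ i ∈ (rightNbrs G a)ᶜ}
  have hcover : ({σ | ¬IsSpread G σ (K + 1)} : Finset (Equiv.Perm V)) ⊆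
      univ.biUnion fun a => univ.biUnion fun b =>
        ((leftNbrs G b).powersetCard K).biUnion (avoiding a b) := by
    intro σ hσ
    obtain ⟨a, b, T, hT, hσT⟩ := exists_mapsTo_compl_of_not_isSpread (mem_filter.mp hσ).2
      fun b => by exact_mod_cast hK.trans (hright b)
    simp only [mem_biUnion, mem_univ, true_and]
    exact ⟨a, b, T, hT, mem_filter.mpr ⟨mem_univ _, hσT⟩⟩
  have havoiding : ∀ a b, ∀ T ∈ (leftNbrs G b).powersetCard K,
      (#(avoiding a b T) : ℝ) ≤ E := by
    intro a b T hT
    obtain ⟨hTb, hT⟩ := mem_powersetCard.mp hT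
    refine (card_perm_mapsTo_le_exp (δ := δ) _ _ ?_).trans ?_
    · rw [card_compl]
      push_cast [card_le_univ]
      linarith [hleft a]
    · have hX : δ * n - K ≤ #(leftNbrs G b \ T) := by
        rw [card_sdiff_of_subset hTb, hT, Nat.cast_sub (hT ▸ card_le_card hTb)]
        linarith [hright b]
      unfold E
      gcongr
  have hpowersetCard : ∀ b, #((leftNbrs G b).powersetCard K) ≤ n.choose K := fun b => by
    rw [card_powersetCard]
    exact Nat.choose_le_choose K (card_le_univ _)
  calc (#{σ : Equiv.Perm V | ¬IsSpread G σ (K + 1)} : ℝ)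
      ≤ ∑ a, ∑ b, ∑ T ∈ (leftNbrs G b).powersetCard K, (#(avoiding a b T) : ℝ) := by
        exact_mod_cast (card_le_card hcover).trans (card_biUnion_le.trans (sum_le_sum fun a _ =>
          card_biUnion_le.trans (sum_le_sum fun b _ => card_biUnion_le)))
    _ ≤ ∑ a : V, ∑ b : V, (n.choose K : ℝ) * E := by
        gcongr with a _ b _
        refine (sum_le_card_nsmul _ _ _ (havoiding a b)).trans ?_
        rw [nsmul_eq_mul]
        gcongr
        exact_mod_cast hpowersetCard b
    _ = _ := by simp only [sum_const, card_univ, nsmul_eq_mul, E]; ring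

theorem one_sub_mul_factorial_le_card_isSpread {G : Finset (V × V)} {β : ℝ}
    (hβ : 0 < β) (hβ1 : β ≤ 1)
    (hleft : ∀ a, β * Fintype.card V ≤ #(rightNbrs G a))
    (hright : ∀ b, β * Fintype.card V ≤ #(leftNbrs G b)) :
    (1 - Fintype.card V ^ 2 * Real.exp (-(β ^ 2 / 2)) ^ Fintype.card V) *
        (Fintype.card V).factorial ≤
      #{σ : Equiv.Perm V | IsSpread G σ (⌊(β ^ 2 / 8) ^ 2 * Fintype.card V⌋₊ + 1)} := by
  set n := Fintype.card V
  set K := ⌊(β ^ 2 / 8) ^ 2 * n⌋₊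
  have hK : (K : ℝ) ≤ (β ^ 2 / 8) ^ 2 * n := Nat.floor_le (by positivity)
  have hKβ : (K : ℝ) ≤ β / 4 * n := by
    refine hK.trans (mul_le_mul_of_nonneg_right ?_ n.cast_nonneg)
    have : β ^ 3 ≤ 1 := pow_le_one₀ hβ.le hβ1
    nlinarith
  have hexponent : 2 * (β ^ 2 / 8) * n - β * (β * n - K) ≤ n * -(β ^ 2 / 2) := by
    nlinarith
  have hbad : (#{σ : Equiv.Perm V | ¬IsSpread G σ (K + 1)} : ℝ) ≤
      n ^ 2 * Real.exp (-(β ^ 2 / 2)) ^ n * n.factorial :=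
    calc _ ≤ n ^ 2 * n.choose K * Real.exp (-(β * (β * n - K))) * n.factorial :=
          card_not_isSpread_le hβ.le hleft hright
            (hKβ.trans (by nlinarith [n.cast_nonneg (α := ℝ)]))
      _ ≤ n ^ 2 * Real.exp (2 * (β ^ 2 / 8) * n) * Real.exp (-(β * (β * n - K))) *
            n.factorial := by
          gcongr
          exact Nat.choose_le_exp (by positivity) hK
      _ = n ^ 2 * Real.exp (2 * (β ^ 2 / 8) * n - β * (β * n - K)) * n.factorial := by
          rw [sub_eq_add_neg (2 * (β ^ 2 / 8) * n), Real.exp_add]; ring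
      _ ≤ n ^ 2 * Real.exp (-(β ^ 2 / 2)) ^ n * n.factorial := by
          rw [← Real.exp_nat_mul]
          gcongr
  have hsplit : (#{σ : Equiv.Perm V | IsSpread G σ (K + 1)} : ℝ) +
      #{σ : Equiv.Perm V | ¬IsSpread G σ (K + 1)} = n.factorial := by
    rw [← Fintype.card_perm, ← card_univ]
    exact_mod_cast card_filter_add_card_filter_not _
  linarith

end

open scoped Classical in
/-- For every `α > 0` there is `ξ > 0` such that: for every `ε > 0` there is `n₀` such that
for all `n ≥ n₀` and every bipartite graph `G` between two copies of `Fin n` (edges are pairs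
`(a, b)`) with minimum degree at least `αn`, the proportion of perfect matchings `σ` (i.e.
bijections, viewed as the edge sets `{(a, σ a)}`) such that for every sub-matching `M` of `σ`
with at least `(1-ξ)n` edges the graph `G ∪ M` has a perfect matching, is at least `1 - ε`. -/
theorem bipartite_plus_random_near_perfect_matching (α : ℝ) (hα : 0 < α) :
    ∃ ξ : ℝ, 0 < ξ ∧ ∀ ε : ℝ, 0 < ε → ∃ n₀ : ℕ, ∀ n : ℕ, n₀ ≤ n →
      ∀ G : Finset (Fin n × Fin n),
        (∀ a : Fin n, α * n ≤ ((G.filter fun e => e.1 = a).card : ℝ)) →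
        (∀ b : Fin n, α * n ≤ ((G.filter fun e => e.2 = b).card : ℝ)) →
        (1 - ε) * ((univ : Finset (Equiv.Perm (Fin n))).card : ℝ) ≤
          (((univ : Finset (Equiv.Perm (Fin n))).filter fun σ =>
              ∀ M : Finset (Fin n × Fin n),
                M ⊆ (univ.filter fun e : Fin n × Fin n => σ e.1 = e.2) →
                (1 - ξ) * (n : ℝ) ≤ (M.card : ℝ) →
                ∃ τ : Equiv.Perm (Fin n), ∀ a : Fin n, (a, τ a) ∈ G ∪ M).card : ℝ) := by
  set β := min α 1
  have hβ : 0 < β := lt_min hα one_pos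
  refine ⟨(β ^ 2 / 8) ^ 2, by positivity, fun ε hε => ?_⟩
  obtain ⟨n₀, hn₀⟩ := Filter.eventually_atTop.mp
    ((tendsto_pow_const_mul_const_pow_of_lt_one 2 (Real.exp_pos (-(β ^ 2 / 2))).le
      (Real.exp_lt_one_iff.mpr (by nlinarith))).eventually (gt_mem_nhds hε))
  refine ⟨n₀, fun n hn G hA hB => ?_⟩
  have hdeg {m : ℕ} (h : α * n ≤ m) : β * Fintype.card (Fin n) ≤ m := by
    rw [Fintype.card_fin]
    exact (mul_le_mul_of_nonneg_right (min_le_left _ _) n.cast_nonneg).trans h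
  have hspread := one_sub_mul_factorial_le_card_isSpread hβ (min_le_right _ _)
    (fun a => hdeg (card_rightNbrs G a ▸ hA a)) (fun b => hdeg (card_leftNbrs G b ▸ hB b))
  rw [card_univ, Fintype.card_perm]
  refine le_trans ?_ (hspread.trans (by exact_mod_cast card_le_card (monotone_filter_right _
    fun σ _ hσ M hM hMcard => IsSpread.exists_perm_forall_mem_union_of_le_card hσ hM
      (by rwa [Fintype.card_fin]))))
  gcongr
  simpa using (hn₀ n hn).le
end

section
/- There exist functions f(n) → 0 and g(n) → 0 as n → ∞ such that the following holds for every n, every tournament T on n vertices, every p with 0 ≤ p ≤ 1/2, and every vertex v of T: if v has out-degree k in T, and P is the random tournament obtained from T by reversing each edge independently with probability p, then the probability that v has out-degree less than k/3 in P is at most f(n)·e^{−k} + g(n)/n; the same bound holds with out-degree replaced by in-degree throughout. -/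
open Finset Filter

/-- `T` is a tournament on `Fin n`: no loops, and between any two distinct vertices there is
exactly one arc (`T u v = true` means there is an arc from `u` to `v`). -/
def IsTournament {n : ℕ} (T : Fin n → Fin n → Bool) : Prop :=
  (∀ v, T v v = false) ∧ ∀ u v : Fin n, u ≠ v → T u v = !T v u

/-- The out-degree of `v`. -/
def outDeg {n : ℕ} (T : Fin n → Fin n → Bool) (v : Fin n) : ℕ :=
  (univ.filter fun w => T v w = true).card

/-- The in-degree of `v`. -/
def inDeg {n : ℕ} (T : Fin n → Fin n → Bool) (v : Fin n) : ℕ :=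
  (univ.filter fun w => T w v = true).card

/-- The unordered pairs of vertices, represented as ordered pairs `(u, v)` with `u < v`. -/
def edgePairs (n : ℕ) : Finset (Fin n × Fin n) :=
  (univ : Finset (Fin n × Fin n)).filter fun e => e.1 < e.2

/-- The tournament obtained from `T` by reversing the edges in `S`. -/
def flipEdges {n : ℕ} (T : Fin n → Fin n → Bool) (S : Finset (Fin n × Fin n)) :
    Fin n → Fin n → Bool :=
  fun u v => if (u, v) ∈ S ∨ (v, u) ∈ S then T v u else T u v

open scoped Classical in
/-- The probability that the random tournament obtained from `T` by reversing each edge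
independently with probability `p` satisfies `Q`. -/
noncomputable def flipProb {n : ℕ} (p : ℝ) (T : Fin n → Fin n → Bool)
    (Q : (Fin n → Fin n → Bool) → Prop) : ℝ :=
  ∑ S ∈ (edgePairs n).powerset,
    if Q (flipEdges T S) then p ^ S.card * (1 - p) ^ ((edgePairs n).card - S.card) else 0

/-!
In the perturbed tournament the out-degree of `v` is `X + Y`, where `X` counts the out-edges of
`v` that are kept and `Y` the in-edges that are reversed: independent binomials with `k` and
`m = n - 1 - k` trials. The event `X + Y < k / 3` forces more than `2k/3` out-edges and fewer
than `k/3` in-edges to be reversed, so the exponential Markov inequality, with weight `e^s` per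
reversed out-edge and `e^{-t}` per reversed in-edge, bounds its probability by
`(p e^s + 1 - p)^k (p e^{-t} + 1 - p)^m e^{t k/3 - 2 s k/3}`.
If `k ≥ 40 log n`, then `s = log 2, t = 0` gives `(27/32)^{k/3} ≤ e^{-k/20} ≤ n^{-2}`.
Otherwise `s = log x, t = log 2` with `x = √n / 160`: since `k (x - 1) ≤ m / 2` the dependence
on `p` cancels, leaving `(2 / x^2)^{k/3}`, which is at most `e^{4/3} x^{-2/3} e^{-k}` as soon as
`x ≥ e^2`; for the finitely many smaller `n` the coefficient `e^n` makes the bound trivial.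
-/

namespace Finset

variable {α R : Type*} [DecidableEq α] [CommSemiring R]

theorem sum_powerset_prod_mul_pow_mul_pow (E : Finset α) (μ : α → R) (p q : R) :
    ∑ S ∈ E.powerset, (∏ e ∈ S, μ e) * (p ^ #S * q ^ (#E - #S)) =
      ∏ e ∈ E, (p * μ e + q) := by
  rw [prod_add]
  refine sum_congr rfl fun S hS => ?_
  rw [prod_mul_distrib, prod_const, prod_const, card_sdiff_of_subset (mem_powerset.1 hS)]
  ring

theorem sum_powerset_pow_card_inter_mul_pow_card_inter {E D I : Finset α} (hD : D ⊆ E)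
    (hI : I ⊆ E) (hDI : Disjoint D I) {p q : R} (hpq : p + q = 1) (x y : R) :
    ∑ S ∈ E.powerset, x ^ #(S ∩ D) * y ^ #(S ∩ I) * (p ^ #S * q ^ (#E - #S)) =
      (p * x + q) ^ #D * (p * y + q) ^ #I := by
  have hfactor : ∀ e ∈ E, p * ((if e ∈ D then x else 1) * (if e ∈ I then y else 1)) + q =
      (if e ∈ D then p * x + q else 1) * (if e ∈ I then p * y + q else 1) := by
    intro e _
    by_cases heD : e ∈ D
    · simp [heD, disjoint_left.1 hDI heD]
    · by_cases heI : e ∈ I <;> simp [heD, heI, hpq]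
  calc _ = ∑ S ∈ E.powerset,
        (∏ e ∈ S, (if e ∈ D then x else 1) * (if e ∈ I then y else 1)) *
          (p ^ #S * q ^ (#E - #S)) := by
        simp only [prod_mul_distrib, prod_ite_mem, prod_const]
    _ = ∏ e ∈ E, (if e ∈ D then p * x + q else 1) * (if e ∈ I then p * y + q else 1) := by
        rw [sum_powerset_prod_mul_pow_mul_pow, prod_congr rfl hfactor]
    _ = _ := by
        rw [prod_mul_distrib, prod_ite_mem, prod_ite_mem, inter_eq_right.2 hD,
          inter_eq_right.2 hI, prod_const, prod_const]

end Finset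

section Tournament

variable {n : ℕ} {T : Fin n → Fin n → Bool}

def sortedPair (v w : Fin n) : Fin n × Fin n := (min v w, max v w)

theorem sortedPair_injective (v : Fin n) : Function.Injective (sortedPair v) := by
  intro a b h
  simp only [sortedPair, Prod.mk.injEq] at h
  grind

theorem image_sortedPair_subset_edgePairs {v : Fin n} {s : Finset (Fin n)} (hv : v ∉ s) :
    s.image (sortedPair v) ⊆ edgePairs n := by
  simp only [image_subset_iff]
  intro w hw
  simpa [edgePairs, sortedPair] using ne_of_mem_of_not_mem hw hv

theorem flipEdges_apply {S : Finset (Fin n × Fin n)} (hS : S ⊆ edgePairs n) (u w : Fin n) :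
    flipEdges T S u w = if sortedPair u w ∈ S then T w u else T u w := by
  have hmem : ∀ {a b}, (a, b) ∈ S → a < b := fun h => (mem_filter.1 (hS h)).2
  have : (u, w) ∈ S ∨ (w, u) ∈ S ↔ sortedPair u w ∈ S := by
    rcases lt_trichotomy u w with h | rfl | h
    · simpa [sortedPair, h.le] using fun h' => absurd (hmem h') h.asymm
    · simp [sortedPair]
    · simpa [sortedPair, h.le] using fun h' => absurd (hmem h') h.asymm
  simp only [flipEdges, this]

theorem flipEdges_transpose (S : Finset (Fin n × Fin n)) :
    flipEdges (fun u w => T w u) S = fun u w => flipEdges T S w u := by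
  funext u w
  simp only [flipEdges, or_comm]

def outEdges (T : Fin n → Fin n → Bool) (v : Fin n) : Finset (Fin n × Fin n) :=
  (univ.filter fun w => T v w = true).image (sortedPair v)

def inEdges (T : Fin n → Fin n → Bool) (v : Fin n) : Finset (Fin n × Fin n) :=
  (univ.filter fun w => T w v = true).image (sortedPair v)

theorem card_outEdges (v : Fin n) : #(outEdges T v) = outDeg T v :=
  card_image_of_injective _ (sortedPair_injective v)

theorem card_inEdges (v : Fin n) : #(inEdges T v) = inDeg T v :=
  card_image_of_injective _ (sortedPair_injective v)

theorem IsTournament.transpose (hT : IsTournament T) : IsTournament fun u w => T w u :=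
  ⟨hT.1, fun u w h => hT.2 w u (Ne.symm h)⟩

theorem IsTournament.not_and_swap (hT : IsTournament T) (v w : Fin n) :
    ¬(T v w = true ∧ T w v = true) := by
  by_cases h : v = w
  · simp [h, hT.1 w]
  · simp [hT.2 v w h]

theorem IsTournament.outEdges_subset (hT : IsTournament T) (v : Fin n) :
    outEdges T v ⊆ edgePairs n :=
  image_sortedPair_subset_edgePairs (by simp [hT.1 v])

theorem IsTournament.inEdges_subset (hT : IsTournament T) (v : Fin n) :
    inEdges T v ⊆ edgePairs n :=
  image_sortedPair_subset_edgePairs (by simp [hT.1 v])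

theorem IsTournament.disjoint_outEdges_inEdges (hT : IsTournament T) (v : Fin n) :
    Disjoint (outEdges T v) (inEdges T v) := by
  rw [outEdges, inEdges, disjoint_image (sortedPair_injective v), disjoint_filter]
  exact fun w _ h h' => hT.not_and_swap v w ⟨h, h'⟩

theorem IsTournament.outDeg_flipEdges (hT : IsTournament T) {S : Finset (Fin n × Fin n)}
    (hS : S ⊆ edgePairs n) (v : Fin n) :
    outDeg (flipEdges T S) v = #(outEdges T v \ S) + #(inEdges T v ∩ S) := by
  have hsplit : univ.filter (fun w => flipEdges T S v w = true) =
      (univ.filter fun w => T v w = true ∧ sortedPair v w ∉ S) ∪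
        (univ.filter fun w => T w v = true ∧ sortedPair v w ∈ S) := by
    ext w
    by_cases h : sortedPair v w ∈ S <;> simp [flipEdges_apply hS, h]
  have hdisj : Disjoint (univ.filter fun w => T v w = true ∧ sortedPair v w ∉ S)
      (univ.filter fun w => T w v = true ∧ sortedPair v w ∈ S) :=
    disjoint_filter.2 fun w _ h h' => hT.not_and_swap v w ⟨h.1, h'.1⟩
  rw [outDeg, hsplit, card_union_of_disjoint hdisj, sdiff_eq_filter, ← filter_mem_eq_inter,
    outEdges, inEdges, filter_image, filter_image, filter_filter, filter_filter,
    card_image_of_injective _ (sortedPair_injective v),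
    card_image_of_injective _ (sortedPair_injective v)]

theorem IsTournament.outDeg_add_inDeg (hT : IsTournament T) (v : Fin n) :
    outDeg T v + inDeg T v = n - 1 := by
  have hin : univ.filter (fun w => T w v = true) =
      (univ.erase v).filter fun w => ¬T v w = true := by
    ext w
    by_cases h : w = v
    · simp [h, hT.1 v]
    · simp [h, hT.2 w v h]
  have hout : univ.filter (fun w => T v w = true) =
      (univ.erase v).filter fun w => T v w = true := by
    ext w
    by_cases h : w = v <;> simp [h, hT.1 v]
  rw [outDeg, inDeg, hin, hout, card_filter_add_card_filter_not, card_erase_of_mem (mem_univ v),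
    card_univ, Fintype.card_fin]

end Tournament

open Real

theorem pow_le_exp_nat_mul {a : ℝ} (ha : 0 ≤ a) (k : ℕ) : a ^ k ≤ exp (k * (a - 1)) := by
  rw [exp_nat_mul]
  exact pow_le_pow_left₀ ha (by linarith [add_one_le_exp (a - 1)]) k

theorem log_three_halves_sub_le : log (3 / 2) - 2 / 3 * log 2 ≤ -1 / 20 := by
  have h := log_le_sub_one_of_pos (show (0 : ℝ) < (3 / 2) ^ 3 / 2 ^ 2 by norm_num)
  rw [log_div (by norm_num) (by norm_num), log_pow, log_pow] at h
  norm_num at h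
  linarith

theorem log_le_two_mul_sqrt {x : ℝ} (hx : 0 < x) : log x ≤ 2 * √x := by
  have := log_le_sub_one_of_pos (sqrt_pos.2 hx)
  rw [log_sqrt hx.le] at this
  linarith

section FlipProb

variable {n : ℕ} {T : Fin n → Fin n → Bool} {p : ℝ}

theorem flipProb_le_one (hp0 : 0 ≤ p) (hp1 : p ≤ 1)
    (Q : (Fin n → Fin n → Bool) → Prop) : flipProb p T Q ≤ 1 := by
  unfold flipProb
  calc _ ≤ ∑ S ∈ (edgePairs n).powerset, p ^ #S * (1 - p) ^ (#(edgePairs n) - #S) := by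
        refine sum_le_sum fun S _ => ?_
        have := sub_nonneg.2 hp1
        split_ifs
        · exact le_rfl
        · positivity
    _ = 1 := by rw [sum_pow_mul_eq_add_pow, add_sub_cancel, one_pow]

theorem flipProb_transpose (Q : (Fin n → Fin n → Bool) → Prop) :
    flipProb p (fun u w => T w u) Q = flipProb p T fun P => Q fun u w => P w u := by
  unfold flipProb
  refine sum_congr rfl fun S _ => ?_
  beta_reduce
  rw [flipEdges_transpose]

theorem IsTournament.flipProb_outDeg_lt_le (hT : IsTournament T)
    (hp0 : 0 ≤ p) (hp1 : p ≤ 1) {s t : ℝ} (hs : 0 ≤ s) (ht : 0 ≤ t) (v : Fin n)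
    (c : ℝ) :
    flipProb p T (fun P => (outDeg P v : ℝ) < c) ≤
      (p * exp s + (1 - p)) ^ outDeg T v * (p * exp (-t) + (1 - p)) ^ inDeg T v *
        exp (t * c - s * (outDeg T v - c)) := by
  set D := outEdges T v
  set I := inEdges T v
  have hmarkov : ∀ S ⊆ edgePairs n, (outDeg (flipEdges T S) v : ℝ) < c →
      1 ≤ exp s ^ #(S ∩ D) * exp (-t) ^ #(S ∩ I) * exp (t * c - s * (outDeg T v - c)) := by
    intro S hS hlt
    -- on this event more than `k - c` out-edges and fewer than `c` in-edges are reversed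
    have hk : #(D \ S) + #(S ∩ D) = outDeg T v := by
      rw [inter_comm, card_sdiff_add_card_inter, card_outEdges]
    rw [hT.outDeg_flipEdges hS, inter_comm I] at hlt
    rw [← hk, ← exp_nat_mul, ← exp_nat_mul, ← exp_add, ← exp_add, one_le_exp_iff]
    push_cast at hlt ⊢
    nlinarith [(#(D \ S)).cast_nonneg (α := ℝ), (#(S ∩ I)).cast_nonneg (α := ℝ)]
  unfold flipProb
  calc _ ≤ ∑ S ∈ (edgePairs n).powerset, exp s ^ #(S ∩ D) * exp (-t) ^ #(S ∩ I) *
        (p ^ #S * (1 - p) ^ (#(edgePairs n) - #S)) * exp (t * c - s * (outDeg T v - c)) := by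
        refine sum_le_sum fun S hS => ?_
        have hw : 0 ≤ p ^ #S * (1 - p) ^ (#(edgePairs n) - #S) := by
          have := sub_nonneg.2 hp1; positivity
        split_ifs with hQ
        · nlinarith [hmarkov S (mem_powerset.1 hS) hQ]
        · positivity
    _ = _ := by
        rw [← sum_mul, sum_powerset_pow_card_inter_mul_pow_card_inter (hT.outEdges_subset v)
          (hT.inEdges_subset v) (hT.disjoint_outEdges_inEdges v) (add_sub_cancel p 1),
          card_outEdges, card_inEdges]

theorem IsTournament.flipProb_outDeg_lt_third_le_exp (hT : IsTournament T) (hp0 : 0 ≤ p)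
    (hp : p ≤ 1 / 2) (v : Fin n) :
    flipProb p T (fun P => (outDeg P v : ℝ) < outDeg T v / 3) ≤ exp (-(outDeg T v / 20)) := by
  have hk : (0 : ℝ) ≤ outDeg T v := (outDeg T v).cast_nonneg
  refine (hT.flipProb_outDeg_lt_le hp0 (by linarith) (log_nonneg one_le_two) le_rfl v _).trans ?_
  rw [exp_log two_pos, neg_zero, exp_zero, mul_one, add_sub_cancel, one_pow, mul_one]
  calc _ ≤ (3 / 2 : ℝ) ^ outDeg T v *
        exp (0 * (outDeg T v / 3) - log 2 * (outDeg T v - outDeg T v / 3)) := by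
        gcongr <;> linarith
    _ = exp (outDeg T v * (log (3 / 2) - 2 / 3 * log 2)) := by
        rw [← exp_log (show (0 : ℝ) < 3 / 2 by norm_num), ← exp_nat_mul, ← exp_add, log_exp]
        ring_nf
    _ ≤ _ := exp_le_exp.2 (by nlinarith [log_three_halves_sub_le])

theorem IsTournament.flipProb_outDeg_lt_third_le_exp_log (hT : IsTournament T) (hp0 : 0 ≤ p)
    (hp1 : p ≤ 1) {x : ℝ} (hx : 1 ≤ x) {v : Fin n}
    (hxk : (x - 1) * outDeg T v ≤ inDeg T v / 2) :
    flipProb p T (fun P => (outDeg P v : ℝ) < outDeg T v / 3) ≤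
      exp ((log 2 - 2 * log x) * outDeg T v / 3) := by
  refine (hT.flipProb_outDeg_lt_le hp0 hp1 (log_nonneg hx) (log_nonneg one_le_two) v _).trans ?_
  rw [exp_log (by linarith), exp_neg, exp_log two_pos]
  calc _ ≤ exp (outDeg T v * (p * x + (1 - p) - 1)) *
        exp (inDeg T v * (p * 2⁻¹ + (1 - p) - 1)) *
        exp (log 2 * (outDeg T v / 3) - log x * (outDeg T v - outDeg T v / 3)) := by
        gcongr
        · exact pow_le_exp_nat_mul (by nlinarith) _
        · exact pow_le_exp_nat_mul (by nlinarith) _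
    _ ≤ _ := by
        rw [← exp_add, ← exp_add]
        exact exp_le_exp.2 (by nlinarith)

theorem IsTournament.flipProb_outDeg_lt_third_le_of_lt_log (hT : IsTournament T) (hp0 : 0 ≤ p)
    (hp1 : p ≤ 1) {v : Fin n} (hk : 1 ≤ (outDeg T v : ℝ))
    (hklog : (outDeg T v : ℝ) < 40 * log n) (hx : exp 2 ≤ √n / 160) :
    flipProb p T (fun P => (outDeg P v : ℝ) < outDeg T v / 3) ≤
      exp (4 / 3 - 2 / 3 * log (√n / 160)) * exp (-(outDeg T v)) := by
  have hn : (0 : ℝ) < n := by exact_mod_cast v.pos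
  have hL : 2 ≤ log (√n / 160) := (le_log_iff_exp_le (by linarith [exp_pos 2])).2 hx
  have hdeg : (outDeg T v : ℝ) + inDeg T v = n - 1 := by
    rw [← Nat.cast_add, hT.outDeg_add_inDeg v, Nat.cast_sub v.pos, Nat.cast_one]
  have hxk : (√n / 160 - 1) * outDeg T v ≤ inDeg T v / 2 := by
    have := sq_sqrt hn.le
    nlinarith [sqrt_nonneg (n : ℝ), log_le_two_mul_sqrt hn]
  calc _ ≤ exp ((log 2 - 2 * log (√n / 160)) * outDeg T v / 3) :=
        hT.flipProb_outDeg_lt_third_le_exp_log hp0 hp1 (by linarith [add_one_le_exp 2]) hxk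
    _ ≤ _ := by
        rw [← exp_add]
        exact exp_le_exp.2 (by nlinarith [log_two_lt_d9])

end FlipProb

noncomputable def degreeTailCoeff (n : ℕ) : ℝ :=
  if exp 2 ≤ √n / 160 then exp (4 / 3 - 2 / 3 * log (√n / 160)) else exp n

theorem degreeTailCoeff_nonneg (n : ℕ) : 0 ≤ degreeTailCoeff n := by
  unfold degreeTailCoeff
  split_ifs <;> positivity

theorem tendsto_degreeTailCoeff : Tendsto degreeTailCoeff atTop (nhds 0) := by
  have hx : Tendsto (fun n : ℕ => √n / 160) atTop atTop :=
    (tendsto_sqrt_atTop.comp tendsto_natCast_atTop_atTop).atTop_div_const (by norm_num)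
  have hexp : Tendsto (fun n : ℕ => exp (4 / 3 - 2 / 3 * log (√n / 160))) atTop (nhds 0) :=
    tendsto_exp_atBot.comp <| tendsto_atBot_add_const_left _ _ <| tendsto_neg_atTop_atBot.comp <|
      (tendsto_log_atTop.comp hx).const_mul_atTop (by norm_num)
  refine hexp.congr' ?_
  filter_upwards [hx.eventually_ge_atTop (exp 2)] with n hn
  simp [degreeTailCoeff, hn]

theorem IsTournament.flipProb_outDeg_lt_third_le {n : ℕ} {T : Fin n → Fin n → Bool}
    (hT : IsTournament T) {p : ℝ} (hp0 : 0 ≤ p) (hp : p ≤ 1 / 2) (v : Fin n) :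
    flipProb p T (fun P => (outDeg P v : ℝ) < outDeg T v / 3) ≤
      degreeTailCoeff n * exp (-(outDeg T v)) + 1 / n / n := by
  have hn : (1 : ℝ) ≤ n := by exact_mod_cast v.pos
  have hf : 0 ≤ degreeTailCoeff n * exp (-(outDeg T v)) :=
    mul_nonneg (degreeTailCoeff_nonneg n) (exp_pos _).le
  have hg : (0 : ℝ) ≤ 1 / n / n := by positivity
  rcases Nat.eq_zero_or_pos (outDeg T v) with hk0 | hk1
  · have : flipProb p T (fun P => (outDeg P v : ℝ) < outDeg T v / 3) = 0 :=
      sum_eq_zero fun S _ => if_neg (by simp [hk0])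
    linarith
  by_cases hbig : 40 * log n ≤ outDeg T v
  · calc _ ≤ exp (-(outDeg T v / 20)) := hT.flipProb_outDeg_lt_third_le_exp hp0 hp v
      _ ≤ exp (-(2 * log n)) := exp_le_exp.2 (by linarith)
      _ = 1 / n / n := by
          rw [exp_neg, two_mul, exp_add, exp_log (by linarith)]
          field_simp
      _ ≤ _ := le_add_of_nonneg_left hf
  by_cases hlarge : exp 2 ≤ √n / 160
  · rw [degreeTailCoeff, if_pos hlarge]
    exact (hT.flipProb_outDeg_lt_third_le_of_lt_log hp0 (by linarith)
      (by exact_mod_cast hk1) (lt_of_not_ge hbig) hlarge).trans (le_add_of_nonneg_right hg)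
  · have hkn : (outDeg T v : ℝ) ≤ n := by
      exact_mod_cast (card_filter_le _ _).trans (card_fin n).le
    calc _ ≤ 1 := flipProb_le_one hp0 (by linarith) _
      _ ≤ degreeTailCoeff n * exp (-(outDeg T v)) := by
          rw [degreeTailCoeff, if_neg hlarge, ← exp_add]
          exact one_le_exp_iff.2 (by linarith)
      _ ≤ _ := le_add_of_nonneg_right hg

/-- There are functions `f(n) → 0` and `g(n) → 0` such that for every `n`, every tournament
`T` on `n` vertices, every `0 ≤ p ≤ 1/2` and every vertex `v` of out-degree (resp. in-degree)
`k` in `T`, the probability that `v` has out-degree (resp. in-degree) less than `k/3` in the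
random tournament obtained from `T` by reversing each edge independently with probability `p`
is at most `f(n)·e^{-k} + g(n)/n`. -/
theorem perturbed_tournament_preserves_degree :
    ∃ f g : ℕ → ℝ,
      Tendsto f atTop (nhds 0) ∧ Tendsto g atTop (nhds 0) ∧
      ∀ (n : ℕ) (T : Fin n → Fin n → Bool), IsTournament T →
        ∀ p : ℝ, 0 ≤ p → p ≤ 1 / 2 → ∀ (v : Fin n) (k : ℕ),
          (outDeg T v = k →
            flipProb p T (fun P => (outDeg P v : ℝ) < (k : ℝ) / 3) ≤
              f n * Real.exp (-(k : ℝ)) + g n / n) ∧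
          (inDeg T v = k →
            flipProb p T (fun P => (inDeg P v : ℝ) < (k : ℝ) / 3) ≤
              f n * Real.exp (-(k : ℝ)) + g n / n) := by
  refine ⟨degreeTailCoeff, fun n => 1 / n, tendsto_degreeTailCoeff,
    tendsto_one_div_atTop_nhds_zero_nat, fun n T hT p hp0 hp v k => ⟨?_, ?_⟩⟩
  · rintro rfl
    exact hT.flipProb_outDeg_lt_third_le hp0 hp v
  · rintro rfl
    have := hT.transpose.flipProb_outDeg_lt_third_le hp0 hp v
    rwa [flipProb_transpose] at this
end

section
/- Let k be a positive integer and let D be a digraph in which every vertex has in-degree at least k and out-degree at least k, and suppose that for every pair of disjoint sets A, B ⊆ V(D) with |A| = |B| = k there is an arc from A to B (i.e., an arc (a, b) with a ∈ A and b ∈ B). Then for every ordered pair of distinct vertices v, w of D there is a directed path from v to w of length at most 3; in particular, D is strongly connected. -/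
/-!
If `v → w` is not an arc and `v`, `w` have no common neighbour, then the out-neighbourhood of `v`
and the in-neighbourhood of `w` are disjoint sets of size at least `k`, so the expansion hypothesis
gives an arc `a → b` from the first into the second, and `v → a → b → w` is a path.
-/

open Finset

/-- A directed path from `v` to `w` in the digraph with arc set `D`, recorded by its list `l`
of internal vertices (so the path has length `l.length + 1`). -/
def IsDipath {n : ℕ} (D : Finset (Fin n × Fin n)) (v w : Fin n) (l : List (Fin n)) : Prop :=
  l.Nodup ∧ v ∉ l ∧ w ∉ l ∧ List.Chain (fun a b => (a, b) ∈ D) v (l ++ [w])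

section Neighbourhoods

variable {α : Type*} [DecidableEq α] (D : Finset (α × α))

def outNbhd (v : α) : Finset α := (D.filter fun a => a.1 = v).image Prod.snd

def inNbhd (w : α) : Finset α := (D.filter fun a => a.2 = w).image Prod.fst

variable {D}

@[simp]
lemma mem_outNbhd {v u : α} : u ∈ outNbhd D v ↔ (v, u) ∈ D := by
  simp [outNbhd]

@[simp]
lemma mem_inNbhd {w u : α} : u ∈ inNbhd D w ↔ (u, w) ∈ D := by
  simp [inNbhd]

lemma card_outNbhd (v : α) : (outNbhd D v).card = (D.filter fun a => a.1 = v).card :=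
  card_image_of_injOn fun _ ha _ hb hab =>
    Prod.ext ((mem_filter.1 ha).2.trans (mem_filter.1 hb).2.symm) hab

lemma card_inNbhd (w : α) : (inNbhd D w).card = (D.filter fun a => a.2 = w).card :=
  card_image_of_injOn fun _ ha _ hb hab =>
    Prod.ext hab ((mem_filter.1 ha).2.trans (mem_filter.1 hb).2.symm)

end Neighbourhoods

lemma exists_arc_of_disjoint {α : Type*} {D : Finset (α × α)} {k : ℕ}
    (hexp : ∀ A B : Finset α, Disjoint A B → A.card = k → B.card = k → ∃ a ∈ A, ∃ b ∈ B, (a, b) ∈ D)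
    {S T : Finset α} (hST : Disjoint S T) (hS : k ≤ S.card) (hT : k ≤ T.card) :
    ∃ a ∈ S, ∃ b ∈ T, (a, b) ∈ D := by
  obtain ⟨A, hAS, hA⟩ := exists_subset_card_eq hS
  obtain ⟨B, hBT, hB⟩ := exists_subset_card_eq hT
  obtain ⟨a, ha, b, hb, hab⟩ := hexp A B (hST.mono hAS hBT) hA hB
  exact ⟨a, hAS ha, b, hBT hb, hab⟩

section Dipaths

variable {n : ℕ} {D : Finset (Fin n × Fin n)} {v w : Fin n}

lemma isDipath_nil (hvw : (v, w) ∈ D) : IsDipath D v w [] :=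
  ⟨List.nodup_nil, List.not_mem_nil, List.not_mem_nil, .cons_cons hvw (.singleton w)⟩

lemma isDipath_singleton {u : Fin n} (hvu : (v, u) ∈ D) (huw : (u, w) ∈ D) (hv : v ≠ u)
    (hw : w ≠ u) : IsDipath D v w [u] :=
  ⟨List.nodup_singleton u, by simpa, by simpa, .cons_cons hvu (.cons_cons huw (.singleton w))⟩

lemma isDipath_pair {a b : Fin n} (hva : (v, a) ∈ D) (hab : (a, b) ∈ D) (hbw : (b, w) ∈ D)
    (hne : a ≠ b) (hv : v ≠ a ∧ v ≠ b) (hw : w ≠ a ∧ w ≠ b) : IsDipath D v w [a, b] :=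
  ⟨by simpa, by simpa, by simpa,
    .cons_cons hva (.cons_cons hab (.cons_cons hbw (.singleton w)))⟩

lemma exists_dipath_length_le_two {k : ℕ} (hirr : ∀ a ∈ D, a.1 ≠ a.2)
    (hexp : ∀ A B : Finset (Fin n), Disjoint A B → A.card = k → B.card = k →
      ∃ a ∈ A, ∃ b ∈ B, (a, b) ∈ D)
    (hv : k ≤ (outNbhd D v).card) (hw : k ≤ (inNbhd D w).card) :
    ∃ l : List (Fin n), IsDipath D v w l ∧ l.length ≤ 2 := by
  by_cases hdir : (v, w) ∈ D
  · exact ⟨[], isDipath_nil hdir, by simp⟩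
  by_cases hcommon : ∃ u, (v, u) ∈ D ∧ (u, w) ∈ D
  · obtain ⟨u, hvu, huw⟩ := hcommon
    exact ⟨[u], isDipath_singleton hvu huw (hirr _ hvu) (hirr _ huw).symm, by simp⟩
  push Not at hcommon
  have hdisj : Disjoint (outNbhd D v) (inNbhd D w) :=
    disjoint_left.2 fun u hvu huw => hcommon u (mem_outNbhd.1 hvu) (mem_inNbhd.1 huw)
  obtain ⟨a, hva, b, hbw, hab⟩ := exists_arc_of_disjoint hexp hdisj hv hw
  rw [mem_outNbhd] at hva
  rw [mem_inNbhd] at hbw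
  have hne : a ≠ b := by
    rintro rfl
    exact hcommon a hva hbw
  have hvb : v ≠ b := by
    rintro rfl
    exact hdir hbw
  have hwa : w ≠ a := by
    rintro rfl
    exact hdir hva
  exact ⟨[a, b], isDipath_pair hva hab hbw hne ⟨hirr _ hva, hvb⟩ ⟨hwa, (hirr _ hbw).symm⟩,
    by simp⟩

end Dipaths

theorem pseudorandom_digraph_strongly_connected_general (k n : ℕ)
    (D : Finset (Fin n × Fin n)) (hirr : ∀ a ∈ D, a.1 ≠ a.2)
    (hout : ∀ v : Fin n, k ≤ (D.filter fun a => a.1 = v).card)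
    (hin : ∀ v : Fin n, k ≤ (D.filter fun a => a.2 = v).card)
    (hexp : ∀ A B : Finset (Fin n), Disjoint A B → A.card = k → B.card = k →
      ∃ a ∈ A, ∃ b ∈ B, (a, b) ∈ D) :
    (∀ v w : Fin n, v ≠ w → ∃ l : List (Fin n), IsDipath D v w l ∧ l.length ≤ 2) ∧
    (∀ v w : Fin n, v ≠ w → ∃ l : List (Fin n), IsDipath D v w l) := by
  have short (v w : Fin n) : ∃ l : List (Fin n), IsDipath D v w l ∧ l.length ≤ 2 :=
    exists_dipath_length_le_two hirr hexp (card_outNbhd v ▸ hout v) (card_inNbhd w ▸ hin w)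
  exact ⟨fun v w _ => short v w, fun v w _ => (short v w).imp fun _ => And.left⟩

/-- For a digraph given by its arc set `D` on `Fin n`: if every vertex has in- and out-degree
at least `k`, and for every pair of disjoint vertex sets `A`, `B` with `|A| = |B| = k` there is
an arc from `A` to `B`, then for every ordered pair of distinct vertices `v`, `w` there is a
directed path from `v` to `w` of length at most `3`; in particular `D` is strongly
connected. -/
theorem pseudorandom_digraph_strongly_connected (k n : ℕ) (hk : 0 < k)
    (D : Finset (Fin n × Fin n)) (hirr : ∀ a ∈ D, a.1 ≠ a.2)
    (hout : ∀ v : Fin n, k ≤ (D.filter fun a => a.1 = v).card)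
    (hin : ∀ v : Fin n, k ≤ (D.filter fun a => a.2 = v).card)
    (hexp : ∀ A B : Finset (Fin n), Disjoint A B → A.card = k → B.card = k →
      ∃ a ∈ A, ∃ b ∈ B, (a, b) ∈ D) :
    (∀ v w : Fin n, v ≠ w → ∃ l : List (Fin n), IsDipath D v w l ∧ l.length ≤ 2) ∧
    (∀ v w : Fin n, v ≠ w → ∃ l : List (Fin n), IsDipath D v w l) :=
  pseudorandom_digraph_strongly_connected_general k n D hirr hout hin hexp
end
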